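/- Max-min margin over the unit sphere for an orthonormal head: let W ∈ ℝ^{K×d} (K ≥ 2, d ≥ K) have orthonormal rows w_1,…,w_K. For any unit vector z ∈ ℝ^d and any class y, the minimal margin min_{c≠y} (⟨w_y, z⟩ − ⟨w_c, z⟩) is at most √(K/(K−1)), and this bound is attained by z* = Wᵀ(e_y − (1/K)𝟙)/√(1 − 1/K), for which every margin ⟨w_y, z*⟩ − ⟨w_c, z*⟩ (c ≠ y) equals √(K/(K−1)). -/

import Mathlib

/-!
With `u = e_y - 𝟙/K`, the sum of the `K - 1` margins of `a = W z` is `K ⟪u, a⟫`, and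
`⟪u, W z⟫ = ⟪Wᵀ u, z⟫ ≤ ‖Wᵀ u‖ = ‖u‖ = √(1 - 1/K)` because `W Wᵀ = 1` makes `Wᵀ` an isometry.
The smallest margin is at most the average `K/(K-1) · √(1 - 1/K) = √(K/(K-1))`. Equality is
attained along `Wᵀ u`, since `W Wᵀ u = u` has all margins equal to `1`.
-/

open Matrix Finset

section Isometry

variable {m n R : Type*} [Fintype m] [Fintype n] [CommRing R]

theorem Matrix.dotProduct_self_transpose_mulVec [DecidableEq m] {W : Matrix m n R}
    (hW : W * Wᵀ = 1) (u : m → R) : (Wᵀ *ᵥ u) ⬝ᵥ (Wᵀ *ᵥ u) = u ⬝ᵥ u := by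
  rw [dotProduct_transpose_mulVec, mulVec_mulVec, hW, one_mulVec]

theorem Matrix.dotProduct_le_sqrt_mul_sqrt (x z : n → ℝ) :
    x ⬝ᵥ z ≤ √(x ⬝ᵥ x) * √(z ⬝ᵥ z) := by
  simpa only [dotProduct, sq] using Real.sum_mul_le_sqrt_mul_sqrt univ x z

theorem Matrix.dotProduct_mulVec_le_sqrt_mul_sqrt [DecidableEq m] {W : Matrix m n ℝ}
    (hW : W * Wᵀ = 1) (u : m → ℝ) (z : n → ℝ) :
    u ⬝ᵥ (W *ᵥ z) ≤ √(u ⬝ᵥ u) * √(z ⬝ᵥ z) := by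
  rw [← dotProduct_transpose_mulVec, ← dotProduct_self_transpose_mulVec hW u, mul_comm]
  exact dotProduct_le_sqrt_mul_sqrt z _

end Isometry

section CenteredIndicator

variable {ι : Type*} [Fintype ι] [DecidableEq ι]

noncomputable def centeredIndicator (y : ι) : ι → ℝ :=
  fun k => (if k = y then 1 else 0) - 1 / Fintype.card ι

theorem centeredIndicator_dotProduct (y : ι) (a : ι → ℝ) :
    centeredIndicator y ⬝ᵥ a = a y - (∑ k, a k) / Fintype.card ι := by
  simp only [centeredIndicator, dotProduct, sub_mul, sum_sub_distrib, ite_mul, one_mul,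
    zero_mul, sum_ite_eq', mem_univ, if_true, ← mul_sum]
  ring

theorem centeredIndicator_dotProduct_self (y : ι) :
    centeredIndicator y ⬝ᵥ centeredIndicator y = 1 - 1 / Fintype.card ι := by
  have hK : (Fintype.card ι : ℝ) ≠ 0 := Nat.cast_ne_zero.2 (Fintype.card_pos_iff.2 ⟨y⟩).ne'
  rw [centeredIndicator_dotProduct]
  simp only [centeredIndicator, sum_sub_distrib, sum_ite_eq', mem_univ, if_true, sum_const,
    card_univ, nsmul_eq_mul]
  field_simp
  ring

theorem centeredIndicator_sub_of_ne {y c : ι} (hc : c ≠ y) :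
    centeredIndicator y y - centeredIndicator y c = 1 := by
  simp [centeredIndicator, hc]

theorem sum_erase_sub_eq_card_mul_centeredIndicator_dotProduct (y : ι) (a : ι → ℝ) :
    ∑ c ∈ univ.erase y, (a y - a c) = Fintype.card ι * (centeredIndicator y ⬝ᵥ a) := by
  have hK : 0 < Fintype.card ι := Fintype.card_pos_iff.2 ⟨y⟩
  have hK0 : (Fintype.card ι : ℝ) ≠ 0 := by positivity
  rw [centeredIndicator_dotProduct, sum_sub_distrib, sum_const, card_erase_of_mem (mem_univ y),
    card_univ, nsmul_eq_mul, Nat.cast_pred hK, ← add_sum_erase _ _ (mem_univ y)]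
  field_simp
  ring

theorem exists_sub_le_centeredIndicator_dotProduct (hK : 2 ≤ Fintype.card ι) (y : ι)
    (a : ι → ℝ) :
    ∃ c ≠ y, a y - a c ≤ centeredIndicator y ⬝ᵥ a / (1 - 1 / Fintype.card ι) := by
  have hK1 : (Fintype.card ι : ℝ) - 1 ≠ 0 := by
    have : (2 : ℝ) ≤ Fintype.card ι := by exact_mod_cast hK
    linarith
  have hne : (univ.erase y).Nonempty := by
    rw [← card_pos, card_erase_of_mem (mem_univ y), card_univ]; omega
  obtain ⟨c, hc, hle⟩ := exists_le_of_sum_le hne (f := fun c => a y - a c)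
    (g := fun _ => centeredIndicator y ⬝ᵥ a / (1 - 1 / Fintype.card ι)) <| by
      rw [sum_erase_sub_eq_card_mul_centeredIndicator_dotProduct, sum_const,
        card_erase_of_mem (mem_univ y), card_univ, nsmul_eq_mul, Nat.cast_pred (by omega)]
      field_simp
      exact le_rfl
  exact ⟨c, ne_of_mem_erase hc, hle⟩

end CenteredIndicator

theorem Real.sqrt_div_sub_one_eq_inv_sqrt {K : ℝ} (hK : K ≠ 0) :
    √(K / (K - 1)) = (√(1 - 1 / K))⁻¹ := by
  rw [← Real.sqrt_inv, one_sub_div hK, inv_div]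

open Matrix in
theorem max_min_margin_orthonormal_head_general (K d : ℕ) (hK : 2 ≤ K)
    (W : Matrix (Fin K) (Fin d) ℝ) (hW : W * Wᵀ = 1) (y : Fin K) :
    (∀ z : Fin d → ℝ, ∑ j, (z j) ^ 2 = 1 →
      ∃ c : Fin K, c ≠ y ∧
        (W *ᵥ z) y - (W *ᵥ z) c ≤ Real.sqrt ((K : ℝ) / ((K : ℝ) - 1))) ∧
    (∀ zstar : Fin d → ℝ,
      zstar = (Real.sqrt (1 - 1 / (K : ℝ)))⁻¹ •
        (Wᵀ *ᵥ (fun k => (if k = y then (1 : ℝ) else 0) - 1 / (K : ℝ))) →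
      (∑ j, (zstar j) ^ 2 = 1) ∧
      ∀ c : Fin K, c ≠ y →
        (W *ᵥ zstar) y - (W *ᵥ zstar) c = Real.sqrt ((K : ℝ) / ((K : ℝ) - 1))) := by
  have hK0 : (K : ℝ) ≠ 0 := by positivity
  have hu : centeredIndicator y = fun k => (if k = y then (1 : ℝ) else 0) - 1 / (K : ℝ) := by
    funext k; simp [centeredIndicator]
  have hu2 : centeredIndicator y ⬝ᵥ centeredIndicator y = 1 - 1 / (K : ℝ) := by
    rw [centeredIndicator_dotProduct_self, Fintype.card_fin]
  have hpos : 0 < 1 - 1 / (K : ℝ) := by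
    rw [sub_pos, div_lt_one (by positivity)]; exact_mod_cast hK
  have hsq (x : Fin d → ℝ) : ∑ j, x j ^ 2 = x ⬝ᵥ x := by simp only [dotProduct, sq]
  simp only [hsq, ← hu, Real.sqrt_div_sub_one_eq_inv_sqrt hK0]
  constructor
  · intro z hz
    obtain ⟨c, hc, hle⟩ := exists_sub_le_centeredIndicator_dotProduct
      (by rwa [Fintype.card_fin]) y (W *ᵥ z)
    refine ⟨c, hc, hle.trans ?_⟩
    have hbound := dotProduct_mulVec_le_sqrt_mul_sqrt hW (centeredIndicator y) z
    rw [hz, hu2, Real.sqrt_one, mul_one] at hbound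
    rw [Fintype.card_fin, ← Real.sqrt_div_self]
    gcongr
  · rintro zstar rfl
    refine ⟨?_, fun c hc => ?_⟩
    · rw [smul_dotProduct, dotProduct_smul, dotProduct_self_transpose_mulVec hW, hu2, smul_smul,
        ← sq, inv_pow, Real.sq_sqrt hpos.le, smul_eq_mul, inv_mul_cancel₀ hpos.ne']
    · rw [mulVec_smul, mulVec_mulVec, hW, one_mulVec, Pi.smul_apply, Pi.smul_apply, smul_eq_mul,
        smul_eq_mul, ← mul_sub, centeredIndicator_sub_of_ne hc, mul_one]

open Matrix in
/-- Max-min margin over the unit sphere for an orthonormal head: for W with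
orthonormal rows (W Wᵀ = I), any unit vector z and class y, the minimal margin
min_{c ≠ y} (⟨w_y, z⟩ − ⟨w_c, z⟩) is at most √(K/(K−1)); the bound is attained
by z* = Wᵀ(e_y − (1/K)𝟙)/√(1 − 1/K), for which every margin equals √(K/(K−1)). -/
theorem max_min_margin_orthonormal_head (K d : ℕ) (hK : 2 ≤ K) (hd : K ≤ d)
    (W : Matrix (Fin K) (Fin d) ℝ) (hW : W * Wᵀ = 1) (y : Fin K) :
    (∀ z : Fin d → ℝ, ∑ j, (z j) ^ 2 = 1 →
      ∃ c : Fin K, c ≠ y ∧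
        (W *ᵥ z) y - (W *ᵥ z) c ≤ Real.sqrt ((K : ℝ) / ((K : ℝ) - 1))) ∧
    (∀ zstar : Fin d → ℝ,
      zstar = (Real.sqrt (1 - 1 / (K : ℝ)))⁻¹ •
        (Wᵀ *ᵥ (fun k => (if k = y then (1 : ℝ) else 0) - 1 / (K : ℝ))) →
      (∑ j, (zstar j) ^ 2 = 1) ∧
      ∀ c : Fin K, c ≠ y →
        (W *ᵥ zstar) y - (W *ᵥ zstar) c = Real.sqrt ((K : ℝ) / ((K : ℝ) - 1))) :=
  max_min_margin_orthonormal_head_general K d hK W hW y
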